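/- arXiv:0906.3209 — 2 statements merged into one kernel-verified Lean document; each statement's English description precedes it below -/
import Mathlib

section
/- If L is a linear operator on a finite-dimensional real inner product space P, L is self-adjoint, and L preserves a chain of subspaces P₀ ⊂ P₁ ⊂ ... ⊂ Pₙ with dim Pₖ = k+1, then for each k there exists an eigenvector of L lying in Pₖ but not in Pₖ₋₁; in particular, if the corresponding eigenvalues are pairwise distinct, these eigenvectors are pairwise orthogonal. -/
/-!
The restriction of `L` to the invariant subspace `P k` is again symmetric, so by the spectral
theorem its eigenspaces span `P k`; since `P (k - 1)` (or `⊥` when `k = 0`) is a proper subspace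
of `P k` by dimension count, some eigenvector escapes it. Orthogonality of eigenvectors for distinct eigenvalues
is the usual computation `μ ⟪v, w⟫ = ⟪L v, w⟫ = ⟪v, L w⟫ = ν ⟪v, w⟫`.
-/

open Module

namespace LinearMap.IsSymmetric

variable {𝕜 E : Type*} [RCLike 𝕜] [NormedAddCommGroup E] [InnerProductSpace 𝕜 E]
  {T : E →ₗ[𝕜] E}

theorem exists_mem_eigenspace_notMem [FiniteDimensional 𝕜 E] (hT : T.IsSymmetric)
    {W : Submodule 𝕜 E} (hW : W ≠ ⊤) : ∃ μ : 𝕜, ∃ v ∈ End.eigenspace T μ, v ∉ W := by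
  have hspan : (⨆ μ, End.eigenspace T μ) = ⊤ :=
    Submodule.orthogonal_eq_bot_iff.mp hT.orthogonalComplement_iSup_eigenspaces_eq_bot
  by_contra! h
  exact hW (top_le_iff.mp (hspan ▸ iSup_le fun μ v hv => h μ v hv))

theorem exists_eigenvector_mem_notMem_of_invariant (hT : T.IsSymmetric)
    {U W : Submodule 𝕜 E} [FiniteDimensional 𝕜 U] (hU : ∀ v ∈ U, T v ∈ U) (hUW : ¬U ≤ W) :
    ∃ μ : 𝕜, ∃ v ∈ U, v ∉ W ∧ T v = μ • v := by
  have hW' : W.comap U.subtype ≠ ⊤ := fun h =>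
    hUW fun v hv => by simpa using (h ▸ Submodule.mem_top : (⟨v, hv⟩ : U) ∈ W.comap U.subtype)
  obtain ⟨μ, v, hv, hvW⟩ := (hT.restrict_invariant hU).exists_mem_eigenspace_notMem hW'
  exact ⟨μ, v, v.2, hvW, congrArg Subtype.val (End.mem_eigenspace_iff.mp hv)⟩

theorem inner_eq_zero_of_eigenvalue_ne (hT : T.IsSymmetric) {v w : E} {μ ν : 𝕜}
    (hv : T v = μ • v) (hw : T w = ν • w) (hμν : μ ≠ ν) : inner 𝕜 v w = 0 :=
  hT.orthogonalFamily_eigenspaces hμν ⟨v, End.mem_eigenspace_iff.mpr hv⟩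
    ⟨w, End.mem_eigenspace_iff.mpr hw⟩

end LinearMap.IsSymmetric

theorem stmt3_general (V : Type*) [NormedAddCommGroup V] [InnerProductSpace ℝ V]
    [FiniteDimensional ℝ V] (n : ℕ)
    (L : V →ₗ[ℝ] V)
    (hsa : ∀ u v : V, inner ℝ (L u) v = (inner ℝ u (L v) : ℝ))
    (P : ℕ → Submodule ℝ V)
    (hrank : ∀ k ≤ n, finrank ℝ (P k) = k + 1)
    (hinv : ∀ k ≤ n, ∀ v ∈ P k, L v ∈ P k) :
    (∀ k ≤ n, ∃ v : V, v ≠ 0 ∧ v ∈ P k ∧ (k = 0 ∨ v ∉ P (k - 1)) ∧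
        ∃ μ : ℝ, L v = μ • v) ∧
    (∀ (v w : V) (μ ν : ℝ), L v = μ • v → L w = ν • w → μ ≠ ν →
        (inner ℝ v w : ℝ) = 0) := by
  have hL : L.IsSymmetric := hsa
  refine ⟨fun k hk => ?_, fun v w μ ν => hL.inner_eq_zero_of_eigenvalue_ne⟩
  cases k with
  | zero =>
    have hP0 : ¬P 0 ≤ ⊥ := fun h => by
      have := Submodule.finrank_mono h
      rw [hrank 0 hk, finrank_bot] at this
      omega
    obtain ⟨μ, v, hvP, hv0, hLv⟩ := hL.exists_eigenvector_mem_notMem_of_invariant (hinv 0 hk) hP0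
    exact ⟨v, hv0, hvP, Or.inl rfl, μ, hLv⟩
  | succ k =>
    have hPk : ¬P (k + 1) ≤ P k := fun h => by
      have := Submodule.finrank_mono h
      rw [hrank (k + 1) hk, hrank k (by omega)] at this
      omega
    obtain ⟨μ, v, hvP, hvPk, hLv⟩ :=
      hL.exists_eigenvector_mem_notMem_of_invariant (hinv (k + 1) hk) hPk
    exact ⟨v, fun h => hvPk (h ▸ (P k).zero_mem), hvP, Or.inr hvPk, μ, hLv⟩

/-- If a self-adjoint operator `L` on an `(n+1)`-dimensional real inner product space
preserves a complete flag `P 0 ⊂ P 1 ⊂ ⋯ ⊂ P n` with `dim (P k) = k + 1`, then for each `k`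
there is an eigenvector of `L` lying in `P k` but not in `P (k-1)`; moreover eigenvectors
for distinct eigenvalues are orthogonal. -/
theorem stmt3 (V : Type*) [NormedAddCommGroup V] [InnerProductSpace ℝ V]
    [FiniteDimensional ℝ V] (n : ℕ) (hdim : finrank ℝ V = n + 1)
    (L : V →ₗ[ℝ] V)
    (hsa : ∀ u v : V, inner ℝ (L u) v = (inner ℝ u (L v) : ℝ))
    (P : ℕ → Submodule ℝ V)
    (hrank : ∀ k ≤ n, finrank ℝ (P k) = k + 1)
    (hchain : ∀ k, k < n → P k < P (k + 1))
    (hinv : ∀ k ≤ n, ∀ v ∈ P k, L v ∈ P k) :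
    (∀ k ≤ n, ∃ v : V, v ≠ 0 ∧ v ∈ P k ∧ (k = 0 ∨ v ∉ P (k - 1)) ∧
        ∃ μ : ℝ, L v = μ • v) ∧
    (∀ (v w : V) (μ ν : ℝ), L v = μ • v → L w = ν • w → μ ≠ ν →
        (inner ℝ v w : ℝ) = 0) :=
  stmt3_general V n L hsa P hrank hinv
end

section
/- If a second-order linear differential operator L(y) = a(x)y'' + b(x)y'' + c(x)y with polynomial coefficients has three polynomial eigenfunctions of pairwise distinct degrees, then deg a ≤ 2, deg b ≤ 1, and c is constant. -/
/-!
Let `k = max (deg a - 2, deg b - 1, deg c)` and suppose `k ≥ 1`. For an eigenfunction `p` of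
degree `n`, the coefficient of `X ^ (n + k)` in `L p = λ p` reads
`n (n - 1) a_{k+2} + n b_{k+1} + c_k = 0`, since `λ p` has degree `n < n + k`. Three distinct
degrees `n` are then three roots of a polynomial of degree at most two, so
`a_{k+2} = b_{k+1} = c_k = 0`, contradicting the choice of `k`.
-/

open Polynomial

namespace Polynomial

variable {R : Type*}

theorem natDegree_le_of_coeff_succ_eq_zero [Semiring R] {p : R[X]} {m : ℕ}
    (hp : p.natDegree ≤ m + 1) (hcoeff : p.coeff (m + 1) = 0) : p.natDegree ≤ m := by
  rw [natDegree_le_iff_coeff_eq_zero]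
  intro N hN
  rcases (Nat.succ_le_of_lt hN).eq_or_lt with rfl | hlt
  · exact hcoeff
  · exact coeff_eq_zero_of_natDegree_lt (hp.trans_lt hlt)

theorem coeff_mul_iterate_derivative_add_natDegree [Semiring R] {f : R[X]} {i j : ℕ}
    (hf : f.natDegree ≤ i + j) (p : R[X]) :
    (f * derivative^[j] p).coeff (i + p.natDegree) =
      f.coeff (i + j) * (p.natDegree.descFactorial j • p.leadingCoeff) := by
  rcases le_or_gt j p.natDegree with hj | hj
  · have hdeg : (derivative^[j] p).natDegree ≤ p.natDegree - j :=
      natDegree_iterate_derivative p j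
    rw [show i + p.natDegree = i + j + (p.natDegree - j) by omega,
      coeff_mul_add_eq_of_natDegree_le hf hdeg, coeff_iterate_derivative,
      Nat.sub_add_cancel hj, leadingCoeff]
  · rw [iterate_derivative_eq_zero hj, Nat.descFactorial_eq_zero_iff_lt.mpr hj]
    simp

theorem coeff_secondOrder_add_natDegree [CommRing R] {a b c : R[X]} {k : ℕ}
    (ha : a.natDegree ≤ k + 2) (hb : b.natDegree ≤ k + 1) (hc : c.natDegree ≤ k) (p : R[X]) :
    (a * derivative (derivative p) + b * derivative p + c * p).coeff (k + p.natDegree) =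
      ((p.natDegree : R) * (p.natDegree - 1) * a.coeff (k + 2) +
        p.natDegree * b.coeff (k + 1) + c.coeff k) * p.leadingCoeff := by
  have h₂ := coeff_mul_iterate_derivative_add_natDegree ha p
  have h₁ := coeff_mul_iterate_derivative_add_natDegree hb p
  have h₀ := coeff_mul_iterate_derivative_add_natDegree (j := 0) hc p
  simp only [Function.iterate_succ_apply', Function.iterate_zero_apply, nsmul_eq_mul,
    Nat.cast_descFactorial_two, Nat.descFactorial_one, Nat.descFactorial_zero, Nat.cast_one,
    add_zero] at h₂ h₁ h₀
  rw [coeff_add, coeff_add, h₂, h₁, h₀]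
  ring

theorem indicial_eq_zero_of_eigenfunction [CommRing R] [IsDomain R] {a b c : R[X]} {k : ℕ}
    (hk : 1 ≤ k) (ha : a.natDegree ≤ k + 2) (hb : b.natDegree ≤ k + 1) (hc : c.natDegree ≤ k)
    {p : R[X]} (hp : p ≠ 0) {lam : R}
    (hL : a * derivative (derivative p) + b * derivative p + c * p = C lam * p) :
    (p.natDegree : R) * (p.natDegree - 1) * a.coeff (k + 2) +
      p.natDegree * b.coeff (k + 1) + c.coeff k = 0 := by
  have hrhs : (C lam * p).coeff (k + p.natDegree) = 0 := by
    rw [coeff_C_mul, coeff_eq_zero_of_natDegree_lt (by omega), mul_zero]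
  rw [← hL, coeff_secondOrder_add_natDegree ha hb hc] at hrhs
  exact (mul_eq_zero.mp hrhs).resolve_right (leadingCoeff_ne_zero.mpr hp)

end Polynomial

theorem eq_zero_of_three_roots {R : Type*} [CommRing R] [IsDomain R] {A B C x y z : R}
    (hxy : x ≠ y) (hxz : x ≠ z) (hyz : y ≠ z)
    (hx : x * (x - 1) * A + x * B + C = 0) (hy : y * (y - 1) * A + y * B + C = 0)
    (hz : z * (z - 1) * A + z * B + C = 0) :
    A = 0 ∧ B = 0 ∧ C = 0 := by
  have hxy' : (x - y) * ((x + y - 1) * A + B) = 0 := by linear_combination hx - hy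
  have hxz' : (x - z) * ((x + z - 1) * A + B) = 0 := by linear_combination hx - hz
  replace hxy' := (mul_eq_zero.mp hxy').resolve_left (sub_ne_zero.mpr hxy)
  replace hxz' := (mul_eq_zero.mp hxz').resolve_left (sub_ne_zero.mpr hxz)
  have hA : A = 0 := by
    have : (y - z) * A = 0 := by linear_combination hxy' - hxz'
    exact (mul_eq_zero.mp this).resolve_left (sub_ne_zero.mpr hyz)
  have hB : B = 0 := by linear_combination hxy' - (x + y - 1) * hA
  exact ⟨hA, hB, by linear_combination hx - x * (x - 1) * hA - x * hB⟩

/-- If `L(y) = a·y'' + b·y' + c·y` with polynomial coefficients has three nonzero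
polynomial eigenfunctions of pairwise distinct degrees, then
`deg a ≤ 2`, `deg b ≤ 1`, and `c` is constant. -/
theorem stmt9 (a b c : ℝ[X]) (p₁ p₂ p₃ : ℝ[X]) (lam₁ lam₂ lam₃ : ℝ)
    (h₁ : p₁ ≠ 0) (h₂ : p₂ ≠ 0) (h₃ : p₃ ≠ 0)
    (hdeg : p₁.natDegree ≠ p₂.natDegree ∧ p₁.natDegree ≠ p₃.natDegree ∧
            p₂.natDegree ≠ p₃.natDegree)
    (hL₁ : a * derivative (derivative p₁) + b * derivative p₁ + c * p₁ = C lam₁ * p₁)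
    (hL₂ : a * derivative (derivative p₂) + b * derivative p₂ + c * p₂ = C lam₂ * p₂)
    (hL₃ : a * derivative (derivative p₃) + b * derivative p₃ + c * p₃ = C lam₃ * p₃) :
    a.natDegree ≤ 2 ∧ b.natDegree ≤ 1 ∧ c.natDegree = 0 := by
  set k := max (a.natDegree - 2) (max (b.natDegree - 1) c.natDegree)
  have ha : a.natDegree ≤ k + 2 := by omega
  have hb : b.natDegree ≤ k + 1 := by omega
  have hc : c.natDegree ≤ k := by omega
  by_contra hbad
  have hk : 1 ≤ k := by omega
  obtain ⟨d₁₂, d₁₃, d₂₃⟩ := hdeg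
  obtain ⟨hA, hB, hC⟩ := eq_zero_of_three_roots
    (Nat.cast_injective.ne d₁₂) (Nat.cast_injective.ne d₁₃) (Nat.cast_injective.ne d₂₃)
    (indicial_eq_zero_of_eigenfunction hk ha hb hc h₁ hL₁)
    (indicial_eq_zero_of_eigenfunction hk ha hb hc h₂ hL₂)
    (indicial_eq_zero_of_eigenfunction hk ha hb hc h₃ hL₃)
  have ha' := natDegree_le_of_coeff_succ_eq_zero ha hA
  have hb' := natDegree_le_of_coeff_succ_eq_zero hb hB
  have hc' := natDegree_le_of_coeff_succ_eq_zero (p := c) (m := k - 1) (by omega)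
    (by rwa [Nat.sub_add_cancel hk])
  omega
end
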